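/- Let J^x_k, J^y_k (k = 1, …, L−1) and B_k (k = 1, …, L) be real numbers and consider the XY spin-chain Hamiltonian H_spin := −Σ_{k=1}^{L−1} (J^x_k σ^x_k σ^x_{k+1} + J^y_k σ^y_k σ^y_{k+1}) − Σ_{k=1}^{L} B_k σ^z_k on (ℂ²)^{⊗L}. Define the antisymmetric matrix A ∈ ℝ^{2L×2L} whose only nonzero entries are A_{2k−1,2k} = 2B_k = −A_{2k,2k−1} for k = 1, …, L, A_{2k,2k+1} = 2J^x_k = −A_{2k+1,2k} for k = 1, …, L−1, and A_{2k−1,2k+2} = −2J^y_k = −A_{2k+2,2k−1} for k = 1, …, L−1. Then, with the Jordan–Wigner Majorana matrices, H_spin = (i/4) Σ_{j,k=1}^{2L} A_{j,k} m_j m_k. -/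

import Mathlib

/-!
Each Jordan–Wigner Majorana operator is a Kronecker product of single-site factors
`(σ^z, …, σ^z, σ, 1, …, 1)`, and the Kronecker product is multiplicative, so products of
Majoranas are computed site by site. As `σ^z σ^z = 1`, the strings cancel except on the sites
involved: `m_{2k-1} m_{2k} = i σ^z_k`, `m_{2k} m_{2k+1} = i σ^x_k σ^x_{k+1}` and
`m_{2k-1} m_{2k+2} = -i σ^y_k σ^y_{k+1}`, while the reversed products are their negatives.
The antisymmetric matrix `A` pairs each such product with its reverse, which reproduces the
Hamiltonian term by term.
-/

open Matrix

noncomputable section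

def pauliX : Matrix (Fin 2) (Fin 2) ℂ := !![0, 1; 1, 0]
def pauliY : Matrix (Fin 2) (Fin 2) ℂ := !![0, -Complex.I; Complex.I, 0]
def pauliZ : Matrix (Fin 2) (Fin 2) ℂ := !![1, 0; 0, -1]

def pauliAt (L : ℕ) (σ : Matrix (Fin 2) (Fin 2) ℂ) (k : Fin L) :
    Matrix (Fin L → Fin 2) (Fin L → Fin 2) ℂ :=
  fun ν μ => ∏ j, if j = k then σ (ν j) (μ j) else (if ν j = μ j then 1 else 0)

lemma pauliZ_apply (a b : Fin 2) :
    pauliZ a b = if a = b then (-1 : ℂ) ^ ((a : ℕ)) else 0 := by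
  fin_cases a <;> fin_cases b <;> simp [pauliZ]

lemma pauliAt_Z_diagonal (L : ℕ) (k : Fin L) :
    pauliAt L pauliZ k = Matrix.diagonal (fun ν => (-1 : ℂ) ^ ((ν k : ℕ))) := by
  ext ν μ
  by_cases h : ν = μ
  · subst h
    simp only [pauliAt, Matrix.diagonal_apply_eq, eq_self_iff_true, if_true]
    calc (∏ j, if j = k then pauliZ (ν j) (ν j) else 1)
        = pauliZ (ν k) (ν k) := by
          rw [Finset.prod_ite_eq' Finset.univ k (fun j => pauliZ (ν j) (ν j))]
          simp
      _ = (-1 : ℂ) ^ ((ν k : ℕ)) := by rw [pauliZ_apply, if_pos rfl]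
  · rw [Matrix.diagonal_apply_ne _ h]
    obtain ⟨j₀, hj₀⟩ := Function.ne_iff.mp h
    refine Finset.prod_eq_zero (Finset.mem_univ j₀) ?_
    by_cases hjk : j₀ = k
    · rw [if_pos hjk, pauliZ_apply, if_neg hj₀]
    · simp [hjk, hj₀]

lemma pauliAt_Z_commute (L : ℕ) (j k : Fin L) :
    Commute (pauliAt L pauliZ j) (pauliAt L pauliZ k) := by
  rw [pauliAt_Z_diagonal, pauliAt_Z_diagonal]
  unfold Commute SemiconjBy
  rw [Matrix.diagonal_mul_diagonal, Matrix.diagonal_mul_diagonal]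
  exact congrArg _ (funext fun i => mul_comm _ _)

/-- The Jordan–Wigner string `∏_{j<k} σ^z_j`. -/
def zString (L : ℕ) (k : Fin L) : Matrix (Fin L → Fin 2) (Fin L → Fin 2) ℂ :=
  Finset.noncommProd (Finset.univ.filter (· < k)) (fun j => pauliAt L pauliZ j)
    (fun a _ b _ _ => pauliAt_Z_commute L a b)

/-- The odd Jordan–Wigner Majorana operator `m_{2k-1} = (∏_{j<k} σ^z_j) σ^x_k`. -/
def jwOdd (L : ℕ) (k : Fin L) : Matrix (Fin L → Fin 2) (Fin L → Fin 2) ℂ :=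
  zString L k * pauliAt L pauliX k

/-- The even Jordan–Wigner Majorana operator `m_{2k} = (∏_{j<k} σ^z_j) σ^y_k`. -/
def jwEven (L : ℕ) (k : Fin L) : Matrix (Fin L → Fin 2) (Fin L → Fin 2) ℂ :=
  zString L k * pauliAt L pauliY k


/-- The full family of Jordan–Wigner Majorana operators, indexed by `Fin L × Fin 2`:
the pair `(k, 0)` stands for `m_{2k-1}` and `(k, 1)` for `m_{2k}`. -/
def jw (L : ℕ) (p : Fin L × Fin 2) : Matrix (Fin L → Fin 2) (Fin L → Fin 2) ℂ :=
  if p.2 = 0 then jwOdd L p.1 else jwEven L p.1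

/-- The coupling matrix of the XY spin chain: its only nonzero entries are
`A_{2k−1,2k} = 2B_k = −A_{2k,2k−1}` (`k = 1, …, L`),
`A_{2k,2k+1} = 2J^x_k = −A_{2k+1,2k}` (`k = 1, …, L−1`), and
`A_{2k−1,2k+2} = −2J^y_k = −A_{2k+2,2k−1}` (`k = 1, …, L−1`), in the indexing where
`(k, 0)` stands for the Majorana index `2k−1` and `(k, 1)` for `2k`. -/
def xyCoupling (L : ℕ) (Jx Jy : Fin (L - 1) → ℝ) (B : Fin L → ℝ) :
    Matrix (Fin L × Fin 2) (Fin L × Fin 2) ℝ :=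
  (∑ k : Fin L,
      (Matrix.single (k, 0) (k, 1) (2 * B k)
        - Matrix.single (k, 1) (k, 0) (2 * B k)))
  + (∑ k : Fin (L - 1),
      (Matrix.single (⟨k.1, by have := k.2; omega⟩, 1) (⟨k.1 + 1, by have := k.2; omega⟩, 0) (2 * Jx k)
        - Matrix.single (⟨k.1 + 1, by have := k.2; omega⟩, 0) (⟨k.1, by have := k.2; omega⟩, 1) (2 * Jx k)))
  + ∑ k : Fin (L - 1),
      (Matrix.single (⟨k.1, by have := k.2; omega⟩, 0) (⟨k.1 + 1, by have := k.2; omega⟩, 1) (-(2 * Jy k))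
        - Matrix.single (⟨k.1 + 1, by have := k.2; omega⟩, 1) (⟨k.1, by have := k.2; omega⟩, 0) (-(2 * Jy k)))

/-- The XY spin-chain Hamiltonian
`H_spin = −∑_{k=1}^{L−1} (J^x_k σ^x_k σ^x_{k+1} + J^y_k σ^y_k σ^y_{k+1}) − ∑_{k=1}^{L} B_k σ^z_k`. -/
def xyHamiltonian (L : ℕ) (Jx Jy : Fin (L - 1) → ℝ) (B : Fin L → ℝ) :
    Matrix (Fin L → Fin 2) (Fin L → Fin 2) ℂ :=
  -(∑ k : Fin (L - 1),
      ((Jx k : ℂ) • (pauliAt L pauliX ⟨k.1, by have := k.2; omega⟩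
          * pauliAt L pauliX ⟨k.1 + 1, by have := k.2; omega⟩)
        + (Jy k : ℂ) • (pauliAt L pauliY ⟨k.1, by have := k.2; omega⟩
          * pauliAt L pauliY ⟨k.1 + 1, by have := k.2; omega⟩)))
  - ∑ k : Fin L, (B k : ℂ) • pauliAt L pauliZ k

section JordanWignerString

variable {ι M : Type*} [LinearOrder ι] [Monoid M]

/-- The site-wise factors `(z, …, z, a, 1, …, 1)` of `(∏_{j<k} z_j) a_k`. -/
def jordanWignerString (z : M) (k : ι) (a : M) : ι → M :=
  fun j => if j < k then z else if j = k then a else 1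

theorem jordanWignerString_one_mul_mulSingle (z : M) (k : ι) (a : M) :
    jordanWignerString z k 1 * Pi.mulSingle k a = jordanWignerString z k a := by
  ext j
  rcases lt_trichotomy j k with h | rfl | h
  · simp [jordanWignerString, h, h.ne]
  · simp [jordanWignerString]
  · simp [jordanWignerString, h.not_gt, h.ne']

theorem jordanWignerString_mul_self {z : M} (hz : z * z = 1) (k : ι) (a b : M) :
    jordanWignerString z k a * jordanWignerString z k b = Pi.mulSingle k (a * b) := by
  ext j
  rcases lt_trichotomy j k with h | rfl | h
  · simp [jordanWignerString, h, h.ne, hz]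
  · simp [jordanWignerString]
  · simp [jordanWignerString, h.not_gt, h.ne']

theorem jordanWignerString_mul_of_covBy {z : M} (hz : z * z = 1) {k l : ι} (hkl : k ⋖ l)
    (a b : M) :
    jordanWignerString z k a * jordanWignerString z l b
      = Pi.mulSingle k (a * z) * Pi.mulSingle l b := by
  ext j
  rcases lt_trichotomy j k with h | rfl | h
  · simp [jordanWignerString, h, h.ne, h.trans hkl.lt, (h.trans hkl.lt).ne, hz]
  · simp [jordanWignerString, hkl.lt, hkl.lt.ne]
  · rcases eq_or_ne j l with rfl | hl
    · simp [jordanWignerString, h.not_gt, h.ne']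
    · have : ¬ j < l := fun hjl => h.not_ge (hkl.le_of_lt hjl)
      simp [jordanWignerString, h.not_gt, h.ne', hl, this]

theorem jordanWignerString_mul_of_covBy' {z : M} (hz : z * z = 1) {k l : ι} (hkl : k ⋖ l)
    (a b : M) :
    jordanWignerString z l b * jordanWignerString z k a
      = Pi.mulSingle k (z * a) * Pi.mulSingle l b := by
  ext j
  rcases lt_trichotomy j k with h | rfl | h
  · simp [jordanWignerString, h, h.ne, h.trans hkl.lt, (h.trans hkl.lt).ne, hz]
  · simp [jordanWignerString, hkl.lt, hkl.lt.ne]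
  · rcases eq_or_ne j l with rfl | hl
    · simp [jordanWignerString, h.not_gt, h.ne']
    · have : ¬ j < l := fun hjl => h.not_ge (hkl.le_of_lt hjl)
      simp [jordanWignerString, h.not_gt, h.ne', hl, this]

end JordanWignerString

theorem Finset.noncommProd_mulSingle_const {ι M : Type*} [DecidableEq ι] [Monoid M]
    (s : Finset ι) (a : M)
    (comm : (s : Set ι).Pairwise (Function.onFun Commute fun i => (Pi.mulSingle i a : ι → M))) :
    s.noncommProd (fun i => (Pi.mulSingle i a : ι → M)) comm
      = fun j => if j ∈ s then a else 1 := by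
  induction s using Finset.cons_induction with
  | empty => ext; simp
  | cons i s hi ih =>
    ext j
    rw [Finset.noncommProd_cons, Pi.mul_apply, ih]
    by_cases hj : j = i
    · subst hj; simp [hi]
    · simp [hj]

section KroneckerPi

variable {ι n R : Type*} [Fintype ι] [DecidableEq ι] [Fintype n] [DecidableEq n] [CommSemiring R]

def kroneckerPi : (ι → Matrix n n R) →* Matrix (ι → n) (ι → n) R where
  toFun A := Matrix.of fun ν μ => ∏ i, A i (ν i) (μ i)
  map_one' := by
    ext ν μ
    by_cases h : ν = μ
    · subst h; simp [Matrix.one_apply]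
    · obtain ⟨i, hi⟩ := Function.ne_iff.mp h
      rw [Matrix.one_apply_ne h]
      exact Finset.prod_eq_zero (Finset.mem_univ i) (by simp [hi])
  map_mul' A B := by
    ext ν μ
    simp only [Matrix.of_apply, Pi.mul_apply, Matrix.mul_apply, Finset.prod_univ_sum,
      Fintype.piFinset_univ, Finset.prod_mul_distrib]

theorem kroneckerPi_apply (A : ι → Matrix n n R) (ν μ : ι → n) :
    kroneckerPi A ν μ = ∏ i, A i (ν i) (μ i) := rfl

theorem kroneckerPi_mulSingle_smul (k : ι) (c : R) (A : Matrix n n R) :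
    kroneckerPi (Pi.mulSingle k (c • A)) = c • kroneckerPi (Pi.mulSingle k A) := by
  have off_site (B : Matrix n n R) (ν μ : ι → n) :
      ∏ j ∈ {k}ᶜ, (Pi.mulSingle k B : ι → Matrix n n R) j (ν j) (μ j)
        = ∏ j ∈ {k}ᶜ, (1 : Matrix n n R) (ν j) (μ j) :=
    Finset.prod_congr rfl fun j hj => by rw [Pi.mulSingle_eq_of_ne (by simpa using hj)]
  ext ν μ
  simp only [kroneckerPi_apply, Matrix.smul_apply, smul_eq_mul,
    Fintype.prod_eq_mul_prod_compl k, Pi.mulSingle_eq_same, off_site, mul_assoc]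

end KroneckerPi

theorem pauliAt_eq_kroneckerPi (L : ℕ) (σ : Matrix (Fin 2) (Fin 2) ℂ) (k : Fin L) :
    pauliAt L σ k = kroneckerPi (Pi.mulSingle k σ) := by
  ext ν μ
  refine Finset.prod_congr rfl fun j _ => ?_
  by_cases h : j = k
  · subst h; simp
  · simp [h, Matrix.one_apply]

theorem pauliAt_smul (L : ℕ) (c : ℂ) (σ : Matrix (Fin 2) (Fin 2) ℂ) (k : Fin L) :
    pauliAt L (c • σ) k = c • pauliAt L σ k := by
  rw [pauliAt_eq_kroneckerPi, pauliAt_eq_kroneckerPi, kroneckerPi_mulSingle_smul]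

theorem zString_eq_kroneckerPi (L : ℕ) (k : Fin L) :
    zString L k = kroneckerPi (jordanWignerString pauliZ k 1) := by
  have comm : ((Finset.univ.filter (· < k) : Finset (Fin L)) : Set (Fin L)).Pairwise
      (Function.onFun Commute fun j => (Pi.mulSingle j pauliZ : Fin L → _)) :=
    fun i _ j _ _ => Pi.mulSingle_apply_commute (fun _ => pauliZ) i j
  refine (Finset.noncommProd_congr rfl (fun j _ => pauliAt_eq_kroneckerPi L pauliZ j) _).trans ?_
  rw [← Finset.map_noncommProd _ _ comm, Finset.noncommProd_mulSingle_const]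
  congr 1
  ext j : 1
  by_cases h : j < k <;> simp [jordanWignerString, h]

theorem zString_mul_pauliAt (L : ℕ) (k : Fin L) (σ : Matrix (Fin 2) (Fin 2) ℂ) :
    zString L k * pauliAt L σ k = kroneckerPi (jordanWignerString pauliZ k σ) := by
  rw [zString_eq_kroneckerPi, pauliAt_eq_kroneckerPi, ← map_mul,
    jordanWignerString_one_mul_mulSingle]

section PauliAlgebra

open Complex

theorem pauliZ_mul_self : pauliZ * pauliZ = 1 := by
  ext i j; fin_cases i <;> fin_cases j <;> simp [pauliZ, Matrix.mul_apply]

theorem pauliX_mul_pauliY : pauliX * pauliY = I • pauliZ := by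
  ext i j; fin_cases i <;> fin_cases j <;> simp [pauliX, pauliY, pauliZ, Matrix.mul_apply]

theorem pauliY_mul_pauliX : pauliY * pauliX = -I • pauliZ := by
  ext i j; fin_cases i <;> fin_cases j <;> simp [pauliX, pauliY, pauliZ, Matrix.mul_apply]

theorem pauliY_mul_pauliZ : pauliY * pauliZ = I • pauliX := by
  ext i j; fin_cases i <;> fin_cases j <;> simp [pauliX, pauliY, pauliZ, Matrix.mul_apply]

theorem pauliZ_mul_pauliY : pauliZ * pauliY = -I • pauliX := by
  ext i j; fin_cases i <;> fin_cases j <;> simp [pauliX, pauliY, pauliZ, Matrix.mul_apply]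

theorem pauliX_mul_pauliZ : pauliX * pauliZ = -I • pauliY := by
  ext i j; fin_cases i <;> fin_cases j <;> simp [pauliX, pauliY, pauliZ, Matrix.mul_apply]

theorem pauliZ_mul_pauliX : pauliZ * pauliX = I • pauliY := by
  ext i j; fin_cases i <;> fin_cases j <;> simp [pauliX, pauliY, pauliZ, Matrix.mul_apply]

end PauliAlgebra

section MajoranaProducts

open Complex

variable {L : ℕ}

theorem zString_mul_pauliAt_mul_self (k : Fin L) (α β : Matrix (Fin 2) (Fin 2) ℂ) :
    zString L k * pauliAt L α k * (zString L k * pauliAt L β k) = pauliAt L (α * β) k := by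
  rw [zString_mul_pauliAt, zString_mul_pauliAt, ← map_mul,
    jordanWignerString_mul_self pauliZ_mul_self, pauliAt_eq_kroneckerPi]

theorem zString_mul_pauliAt_mul_of_covBy {k l : Fin L} (hkl : k ⋖ l)
    (α β : Matrix (Fin 2) (Fin 2) ℂ) :
    zString L k * pauliAt L α k * (zString L l * pauliAt L β l)
      = pauliAt L (α * pauliZ) k * pauliAt L β l := by
  rw [zString_mul_pauliAt, zString_mul_pauliAt, ← map_mul,
    jordanWignerString_mul_of_covBy pauliZ_mul_self hkl, map_mul, pauliAt_eq_kroneckerPi,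
    pauliAt_eq_kroneckerPi]

theorem zString_mul_pauliAt_mul_of_covBy' {k l : Fin L} (hkl : k ⋖ l)
    (α β : Matrix (Fin 2) (Fin 2) ℂ) :
    zString L l * pauliAt L β l * (zString L k * pauliAt L α k)
      = pauliAt L (pauliZ * α) k * pauliAt L β l := by
  rw [zString_mul_pauliAt, zString_mul_pauliAt, ← map_mul,
    jordanWignerString_mul_of_covBy' pauliZ_mul_self hkl, map_mul, pauliAt_eq_kroneckerPi,
    pauliAt_eq_kroneckerPi]

theorem jw_mk_zero (k : Fin L) : jw L (k, 0) = jwOdd L k := rfl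

theorem jw_mk_one (k : Fin L) : jw L (k, 1) = jwEven L k := rfl

theorem jwOdd_mul_jwEven (k : Fin L) : jwOdd L k * jwEven L k = I • pauliAt L pauliZ k := by
  rw [jwOdd, jwEven, zString_mul_pauliAt_mul_self, pauliX_mul_pauliY, pauliAt_smul]

theorem jwEven_mul_jwOdd (k : Fin L) : jwEven L k * jwOdd L k = -I • pauliAt L pauliZ k := by
  rw [jwOdd, jwEven, zString_mul_pauliAt_mul_self, pauliY_mul_pauliX, pauliAt_smul]

theorem jwEven_mul_jwOdd_of_covBy {k l : Fin L} (hkl : k ⋖ l) :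
    jwEven L k * jwOdd L l = I • (pauliAt L pauliX k * pauliAt L pauliX l) := by
  rw [jwOdd, jwEven, zString_mul_pauliAt_mul_of_covBy hkl, pauliY_mul_pauliZ, pauliAt_smul,
    smul_mul_assoc]

theorem jwOdd_mul_jwEven_of_covBy' {k l : Fin L} (hkl : k ⋖ l) :
    jwOdd L l * jwEven L k = -I • (pauliAt L pauliX k * pauliAt L pauliX l) := by
  rw [jwOdd, jwEven, zString_mul_pauliAt_mul_of_covBy' hkl, pauliZ_mul_pauliY, pauliAt_smul,
    smul_mul_assoc]

theorem jwOdd_mul_jwEven_of_covBy {k l : Fin L} (hkl : k ⋖ l) :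
    jwOdd L k * jwEven L l = -I • (pauliAt L pauliY k * pauliAt L pauliY l) := by
  rw [jwOdd, jwEven, zString_mul_pauliAt_mul_of_covBy hkl, pauliX_mul_pauliZ, pauliAt_smul,
    smul_mul_assoc]

theorem jwEven_mul_jwOdd_of_covBy' {k l : Fin L} (hkl : k ⋖ l) :
    jwEven L l * jwOdd L k = I • (pauliAt L pauliY k * pauliAt L pauliY l) := by
  rw [jwOdd, jwEven, zString_mul_pauliAt_mul_of_covBy' hkl, pauliZ_mul_pauliX, pauliAt_smul,
    smul_mul_assoc]

end MajoranaProducts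

def pairingSum {ι M : Type*} [Fintype ι] [AddCommMonoid M] [Module ℂ M] (f : ι → ι → M) :
    Matrix ι ι ℝ →+ M where
  toFun A := ∑ p, ∑ q, (A p q : ℂ) • f p q
  map_zero' := by simp
  map_add' A B := by simp [add_smul, Finset.sum_add_distrib]

theorem pairingSum_single {ι M : Type*} [Fintype ι] [DecidableEq ι] [AddCommMonoid M]
    [Module ℂ M] (f : ι → ι → M) (a b : ι) (c : ℝ) :
    pairingSum f (Matrix.single a b c) = (c : ℂ) • f a b := by
  simp [pairingSum, Matrix.single_apply, ite_and, apply_ite (fun x : ℝ => (x : ℂ)), ite_smul]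

theorem xy_eq_quadratic_majorana (L : ℕ) (Jx Jy : Fin (L - 1) → ℝ) (B : Fin L → ℝ) :
    xyHamiltonian L Jx Jy B
      = (Complex.I / 4) •
          ∑ p : Fin L × Fin 2, ∑ q : Fin L × Fin 2,
            (xyCoupling L Jx Jy B p q : ℂ) • (jw L p * jw L q) := by
  change _ = (Complex.I / 4) • pairingSum (fun p q => jw L p * jw L q) (xyCoupling L Jx Jy B)
  simp only [xyCoupling, map_add, map_sub, map_sum, pairingSum_single, jw_mk_zero, jw_mk_one,
    jwOdd_mul_jwEven, jwEven_mul_jwOdd, jwEven_mul_jwOdd_of_covBy, jwOdd_mul_jwEven_of_covBy',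
    jwOdd_mul_jwEven_of_covBy, jwEven_mul_jwOdd_of_covBy', Fin.covBy_iff, Order.covBy_add_one]
  rw [xyHamiltonian, smul_add, smul_add, Finset.smul_sum, Finset.smul_sum, Finset.smul_sum]
  simp only [Finset.sum_add_distrib, neg_add, sub_eq_add_neg, ← Finset.sum_neg_distrib]
  rw [add_rotate (∑ x : Fin L, _)]
  congr 1; congr 1
  -- each coupling `c` meets a commutator `± 2i P`, and `(i/4) · 2c · 2i = -c`
  all_goals refine Finset.sum_congr rfl fun k _ => ?_
  all_goals match_scalars
  all_goals ring_nf; rw [Complex.I_sq]; ring
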